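/- arXiv:2005.08283 — 3 statements merged into one kernel-verified Lean document; each statement's English description precedes it below -/
import Mathlib

section
/- Let C be a left ideal of the group algebra F[G] of a finite group G. Then the dual code C^⊥ = { x ∈ F[G] : dot(c, x) = 0 for all c ∈ C } equals the image under the star antiautomorphism of the right annihilator rAnn(C) = { x ∈ F[G] : cx = 0 for all c ∈ C }. -/
/-- The star map on a group algebra: `(∑ x_g g)* = ∑ x_{g⁻¹} g`. -/
noncomputable def starMA (F : Type*) [Field F] (G : Type*) [Group G]
    (x : MonoidAlgebra F G) : MonoidAlgebra F G :=
  MonoidAlgebra.ofCoeff (Finsupp.equivMapDomain (Equiv.inv G) x.coeff)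

/-- Coefficientwise dot product on a group algebra. -/
noncomputable def dotMA (F : Type*) [Field F] (G : Type*) [Group G] [Fintype G]
    (u v : MonoidAlgebra F G) : F :=
  ∑ g : G, u.coeff g * v.coeff g

/-!
The dot product is the identity coefficient of a product: `dot(c, x) = (c x*)₁`. In a left
ideal `C`, `c y = 0` for all `c ∈ C` as soon as `(c y)₁ = 0` for all `c ∈ C`, because
`(c y)_h = (h⁻¹ c y)₁` and `h⁻¹ c ∈ C`. Since `*` is an involution, `C^⊥` is therefore the
preimage, equivalently the image, of `rAnn(C)` under `*`.
-/

open MonoidAlgebra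

theorem MonoidAlgebra.forall_mul_eq_zero_iff_forall_coeff_one {R G : Type*} [Semiring R]
    [Group G] (I : Ideal (MonoidAlgebra R G)) (y : MonoidAlgebra R G) :
    (∀ c ∈ I, c * y = 0) ↔ ∀ c ∈ I, (c * y).coeff 1 = 0 := by
  refine ⟨fun h c hc => by rw [h c hc, coeff_zero, Finsupp.zero_apply], fun h c hc => ?_⟩
  ext g
  have := h _ (I.mul_mem_left (single g⁻¹ 1) hc)
  rwa [mul_assoc, coeff_single_mul_apply, inv_inv, mul_one, one_mul] at this

section

variable (F : Type*) [Field F] (G : Type*) [Group G]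

theorem starMA_coeff (x : MonoidAlgebra F G) (g : G) :
    (starMA F G x).coeff g = x.coeff g⁻¹ :=
  rfl

theorem starMA_involutive : Function.Involutive (starMA F G) := fun x => by
  ext g
  simp only [starMA_coeff, inv_inv]

theorem dotMA_eq_coeff_one_mul_starMA [Fintype G] (c x : MonoidAlgebra F G) :
    dotMA F G c x = (c * starMA F G x).coeff 1 := by
  rw [coeff_mul_apply_left, Finsupp.sum_fintype _ _ (by simp), dotMA]
  simp only [starMA_coeff, mul_one, inv_inv]

end

/-- The dual code of a left ideal `C` of `F[G]` is the image under the star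
antiautomorphism of the right annihilator of `C`. -/
theorem stmt_2 (F : Type*) [Field F] (G : Type*) [Group G] [Fintype G]
    (C : Ideal (MonoidAlgebra F G)) :
    {x : MonoidAlgebra F G | ∀ c ∈ C, dotMA F G c x = 0} =
      starMA F G '' {x : MonoidAlgebra F G | ∀ c ∈ C, c * x = 0} := by
  rw [(starMA_involutive F G).image_eq_preimage_symm]
  ext x
  simp only [Set.mem_ofPred_eq, Set.mem_preimage, forall_mul_eq_zero_iff_forall_coeff_one,
    dotMA_eq_coeff_one_mul_starMA]
end

section
/- Let q and n be coprime prime-power and positive integer respectively, and let g be a monic divisor of xⁿ − 1 in F_q[x]. Then the element e_g(x) := −(1/n)·[((g*)′)*]·((xⁿ−1)/g(x)) is an idempotent of the quotient ring F_q[x]/(xⁿ − 1), where g*(x) = x^{deg g} g(1/x) is the reciprocal polynomial and for a polynomial P, (P′)* denotes x^{deg P − 1} P′(1/x). -/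
/-!
Write `xⁿ - 1 = g h`. Since `((g*)′)* = (deg g) g - x g′` and `g h ≡ 0`, the class of `e_g` is
`u / n` with `u = x g′ h`. Its companion `v = x g h′` satisfies `u + v = x (xⁿ - 1)′ = n xⁿ ≡ n`
and `u v = x² g′ h′ (xⁿ - 1) ≡ 0`, so `u / n` and `v / n` are orthogonal idempotents summing to `1`.
-/
open Polynomial

/-- The idempotent `e_g(x) = -(1/n)·[((g*)′)*]·((xⁿ-1)/g)` attached to a monic divisor
`g` of `xⁿ - 1`, as a polynomial.  Here `g* = reflect (deg g) g` is the reciprocal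
polynomial, and `(P′)* = x^(deg P - 1)·P′(1/x) = reflect (deg P - 1) P′`. -/
noncomputable def eIdem (F : Type*) [Field F] (n : ℕ) (g : Polynomial F) : Polynomial F :=
  C (-(n : F)⁻¹) *
    reflect (g.natDegree - 1) (derivative (reflect g.natDegree g)) *
    ((X ^ n - 1) /ₘ g)

theorem FiniteField.isUnit_natCast_of_coprime_card {F : Type*} [Field F] [Fintype F] {n : ℕ}
    (h : (Fintype.card F).Coprime n) : IsUnit (n : F) := by
  simpa [FiniteField.cast_card_eq_zero] using
    (Nat.isCoprime_iff_coprime.2 h).map (Int.castRingHom F)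

namespace Polynomial
variable {R : Type*} [CommRing R]

theorem coeff_X_mul_derivative (p : R[X]) (i : ℕ) :
    (X * derivative p).coeff i = i * p.coeff i := by
  cases i with
  | zero => simp
  | succ i => rw [coeff_X_mul, coeff_derivative]; push_cast; ring

theorem reflect_natDegree_sub_one_derivative_reflect (p : R[X]) :
    reflect (p.natDegree - 1) (derivative (reflect p.natDegree p)) =
      C (p.natDegree : R) * p - X * derivative p := by
  set d := p.natDegree
  ext i
  simp only [coeff_reflect, coeff_derivative, coeff_sub, coeff_C_mul, coeff_X_mul_derivative]
  rcases lt_or_ge i d with hi | hi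
  · rw [revAt_le (by omega : i ≤ d - 1), show d - 1 - i + 1 = d - i by omega,
      revAt_le (Nat.sub_le d i), Nat.sub_sub_self hi.le, show d - 1 - i = d - (i + 1) by omega,
      Nat.cast_sub (by omega : i + 1 ≤ d)]
    push_cast; ring
  · have hrev : revAt (d - 1) i = i := by
      rcases lt_or_ge (d - 1) i with h | h
      · exact revAt_eq_self_of_lt h
      · rw [revAt_le h]; omega
    rw [hrev, revAt_eq_self_of_lt (by omega : d < i + 1),
      coeff_eq_zero_of_natDegree_lt (by omega : d < i + 1), zero_mul]
    rcases hi.eq_or_lt with rfl | hlt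
    · ring
    · rw [coeff_eq_zero_of_natDegree_lt hlt]; ring

theorem X_mul_derivative_X_pow_sub_one (n : ℕ) :
    X * derivative (X ^ n - 1 : R[X]) = C (n : R) + C (n : R) * (X ^ n - 1) := by
  rcases n.eq_zero_or_pos with rfl | hn
  · simp
  · rw [derivative_sub, derivative_one, sub_zero, derivative_X_pow, mul_left_comm, ← pow_succ',
      Nat.sub_add_cancel hn]
    ring

end Polynomial

section QuotientXPowSubOne

variable {R : Type*} [CommRing R] {n : ℕ} {g h : R[X]}

local notation "π" => Ideal.Quotient.mk (Ideal.span {(X ^ n - 1 : R[X])})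

theorem mk_X_mul_derivative_mul_add (hgh : X ^ n - 1 = g * h) :
    π (X * derivative g * h) + π (X * g * derivative h) = π (C (n : R)) := by
  have hX : X * derivative g * h + X * g * derivative h =
      C (n : R) + C (n : R) * (X ^ n - 1) := by
    rw [← X_mul_derivative_X_pow_sub_one, hgh, derivative_mul]; ring
  rw [← map_add, hX, map_add, map_mul, Ideal.Quotient.mk_singleton_self, mul_zero, add_zero]

theorem mk_X_mul_derivative_mul_mul (hgh : X ^ n - 1 = g * h) :
    π (X * derivative g * h) * π (X * g * derivative h) = 0 := by
  rw [← map_mul, show X * derivative g * h * (X * g * derivative h) =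
      X ^ 2 * derivative g * derivative h * (g * h) by ring,
    ← hgh, map_mul, Ideal.Quotient.mk_singleton_self, mul_zero]

end QuotientXPowSubOne

theorem mk_eIdem {F : Type*} [Field F] {n : ℕ} {g h : F[X]} (hg : g.Monic)
    (hgh : X ^ n - 1 = g * h) :
    Ideal.Quotient.mk (Ideal.span {(X ^ n - 1 : F[X])}) (eIdem F n g) =
      Ideal.Quotient.mk (Ideal.span {(X ^ n - 1 : F[X])})
        (C (n : F)⁻¹ * (X * derivative g * h)) := by
  have he : eIdem F n g =
      C (n : F)⁻¹ * (X * derivative g * h) - C ((n : F)⁻¹ * g.natDegree) * (X ^ n - 1) := by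
    rw [eIdem, reflect_natDegree_sub_one_derivative_reflect, hgh, mul_divByMonic_cancel_left h hg,
      C_neg, C_mul]
    ring
  rw [he, map_sub, map_mul _ _ (X ^ n - 1), Ideal.Quotient.mk_singleton_self, mul_zero, sub_zero]

theorem stmt_9_general (F : Type*) [Field F] [Fintype F] (n : ℕ)
    (hq : Nat.Coprime (Fintype.card F) n)
    (g : Polynomial F) (hg : g.Monic) (hdvd : g ∣ X ^ n - 1) :
    IsIdempotentElem
      (Ideal.Quotient.mk (Ideal.span {(X ^ n - 1 : Polynomial F)}) (eIdem F n g)) := by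
  obtain ⟨h, hgh⟩ := hdvd
  have hn : (n : F) ≠ 0 := (FiniteField.isUnit_natCast_of_coprime_card hq).ne_zero
  set π := Ideal.Quotient.mk (Ideal.span {(X ^ n - 1 : F[X])})
  rw [mk_eIdem hg hgh, map_mul]
  refine (IsIdempotentElem.of_mul_add (b := π (C (n : F)⁻¹) * π (X * g * derivative h)) ?_ ?_).1
  · rw [mul_mul_mul_comm, mk_X_mul_derivative_mul_mul hgh, mul_zero]
  · rw [← mul_add, mk_X_mul_derivative_mul_add hgh, ← map_mul, ← C_mul, inv_mul_cancel₀ hn, C_1,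
      map_one]

/-- For a monic divisor `g` of `xⁿ - 1` over a finite field `F_q` with `gcd(q, n) = 1`,
the element `e_g` is an idempotent of `F_q[x]/(xⁿ - 1)`. -/
theorem stmt_9 (F : Type*) [Field F] [Fintype F] (n : ℕ) (hn : 0 < n)
    (hq : Nat.Coprime (Fintype.card F) n)
    (g : Polynomial F) (hg : g.Monic) (hdvd : g ∣ X ^ n - 1) :
    IsIdempotentElem
      (Ideal.Quotient.mk (Ideal.span {(X ^ n - 1 : Polynomial F)}) (eIdem F n g)) :=
  stmt_9_general F n hq g hg hdvd
end

section
/- Let C be a left ideal of F[D_n] and define C_ext := F[D_n]·pr_a(C), the left ideal generated by the projection pr_a(C) ⊆ F[⟨a⟩]. Then C ⊆ C_ext; moreover, for any ideal T of F[⟨a⟩], if C ⊆ F[D_n]·T then pr_a(C) ⊆ T and hence C_ext ⊆ F[D_n]·T. In particular C_ext is the smallest ⟨a⟩-induced left ideal of F[D_n] containing C. -/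
open Polynomial DihedralGroup

/-- The projection `pr_a : F[D_n] → F[⟨a⟩]`, `P(a) + b·Q(a) ↦ P(a)`, with the cyclic
group `⟨a⟩` of order `n` modelled as `Multiplicative (ZMod n)`. -/
noncomputable def prA (F : Type*) [Field F] (n : ℕ) [NeZero n]
    (u : MonoidAlgebra F (DihedralGroup n)) : MonoidAlgebra F (Multiplicative (ZMod n)) :=
  ∑ z : ZMod n, u.coeff (r z) • MonoidAlgebra.of F (Multiplicative (ZMod n)) (Multiplicative.ofAdd z)

/-- The embedding `F[⟨a⟩] → F[D_n]` induced by `z ↦ a^z = r z`. -/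
noncomputable def iotaA (F : Type*) [Field F] (n : ℕ) :
    MonoidAlgebra F (Multiplicative (ZMod n)) →ₐ[F] MonoidAlgebra F (DihedralGroup n) :=
  MonoidAlgebra.lift F (MonoidAlgebra F (DihedralGroup n)) (Multiplicative (ZMod n))
    { toFun := fun z => MonoidAlgebra.of F (DihedralGroup n) (r z.toAdd)
      map_one' := by
        show MonoidAlgebra.of F (DihedralGroup n) (r (Multiplicative.toAdd (1 : Multiplicative (ZMod n)))) = 1
        rw [show r (Multiplicative.toAdd (1 : Multiplicative (ZMod n))) =
          (1 : DihedralGroup n) from rfl, map_one]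
      map_mul' := fun z w => by
        show MonoidAlgebra.of F (DihedralGroup n) (r (Multiplicative.toAdd (z * w))) = _
        rw [show r (Multiplicative.toAdd (z * w)) = r z.toAdd * r w.toAdd from rfl, map_mul] }

/-!
Every `u ∈ F[D_n]` decomposes as `u = pr_a(u) + b · pr_a(b u)`, and `pr_a` is `F[⟨a⟩]`-linear
up to the twist `b P(a) = P(a⁻¹) b`. Hence `u ∈ F[D_n]·T` exactly when `pr_a(u)` and
`pr_a(b u)` lie in `T`. Both halves of the theorem follow, since a left ideal `C` is closed
under `u ↦ b u`.
-/

namespace DihedralAlgebra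

variable {F : Type*} [Field F] {n : ℕ}

open MonoidAlgebra

noncomputable def b : MonoidAlgebra F (DihedralGroup n) := of F _ (sr 0)

lemma b_mul_b : (b * b : MonoidAlgebra F (DihedralGroup n)) = 1 := by
  rw [b, ← map_mul, sr_mul_self, map_one]

lemma coeff_b_mul (u : MonoidAlgebra F (DihedralGroup n)) (g : DihedralGroup n) :
    (b * u).coeff g = u.coeff (sr 0 * g) := by
  rw [b, of_apply, coeff_single_mul_apply, one_mul, inv_sr]

lemma iotaA_eq_mapDomain (p : MonoidAlgebra F (Multiplicative (ZMod n))) :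
    iotaA F n p = mapDomain (fun z => r z.toAdd) p := by
  induction p using MonoidAlgebra.induction_linear with
  | zero => simp
  | add p q hp hq => rw [map_add, mapDomain_add, hp, hq]
  | single z c => simp [iotaA, MonoidAlgebra.lift_single]

lemma coeff_iotaA_r (p : MonoidAlgebra F (Multiplicative (ZMod n))) (w : ZMod n) :
    (iotaA F n p).coeff (r w) = p.coeff (Multiplicative.ofAdd w) := by
  rw [iotaA_eq_mapDomain, coeff_mapDomain]
  exact Finsupp.mapDomain_apply (fun _ _ h => r.inj h) _ (Multiplicative.ofAdd w)

lemma coeff_iotaA_sr (p : MonoidAlgebra F (Multiplicative (ZMod n))) (w : ZMod n) :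
    (iotaA F n p).coeff (sr w) = 0 := by
  rw [iotaA_eq_mapDomain, coeff_mapDomain]
  exact Finsupp.mapDomain_of_notMem_range _ _ (by rintro ⟨_, ⟨⟩⟩)

lemma b_mul_iotaA (p : MonoidAlgebra F (Multiplicative (ZMod n))) :
    b * iotaA F n p = iotaA F n (mapDomain (·⁻¹) p) * b := by
  induction p using MonoidAlgebra.induction_linear with
  | zero => simp
  | add p q hp hq => rw [map_add, mul_add, hp, hq, mapDomain_add, map_add, add_mul]
  | single z c =>
    simp only [b, iotaA_eq_mapDomain, mapDomain_single, of_apply, single_mul_single, one_mul,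
      mul_one, sr_mul_r, r_mul_sr, toAdd_inv, sub_neg_eq_add, zero_add]

variable [NeZero n]

lemma coeff_prA (u : MonoidAlgebra F (DihedralGroup n)) (m : Multiplicative (ZMod n)) :
    (prA F n u).coeff m = u.coeff (r m.toAdd) := by
  simp [prA, of_apply, coeff_single, Finsupp.single_apply, ← Equiv.eq_symm_apply]

lemma prA_zero : prA F n (0 : MonoidAlgebra F (DihedralGroup n)) = 0 := by
  ext m
  rw [coeff_prA]
  rfl

lemma prA_add (u v : MonoidAlgebra F (DihedralGroup n)) :
    prA F n (u + v) = prA F n u + prA F n v := by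
  ext m
  simp only [coeff_prA, MonoidAlgebra.coeff_add, Finsupp.add_apply]

lemma prA_b : prA F n (b : MonoidAlgebra F (DihedralGroup n)) = 0 := by
  ext m
  simp [coeff_prA, b, of_apply, coeff_single]

lemma prA_iotaA (p : MonoidAlgebra F (Multiplicative (ZMod n))) : prA F n (iotaA F n p) = p := by
  ext m
  rw [coeff_prA, coeff_iotaA_r, ofAdd_toAdd]

lemma prA_iotaA_mul (p : MonoidAlgebra F (Multiplicative (ZMod n)))
    (u : MonoidAlgebra F (DihedralGroup n)) :
    prA F n (iotaA F n p * u) = p * prA F n u := by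
  induction p using MonoidAlgebra.induction_linear with
  | zero => rw [map_zero, zero_mul, zero_mul, prA_zero]
  | add p q hp hq => rw [map_add, add_mul, prA_add, hp, hq, add_mul]
  | single z c =>
    ext m
    rw [iotaA_eq_mapDomain, mapDomain_single, coeff_prA, coeff_single_mul_apply,
      coeff_single_mul_apply, coeff_prA, inv_r, r_mul_r, toAdd_mul, toAdd_inv, neg_add_eq_sub]

lemma iotaA_prA_add_b_mul (u : MonoidAlgebra F (DihedralGroup n)) :
    iotaA F n (prA F n u) + b * iotaA F n (prA F n (b * u)) = u := by
  ext (w | w) <;> simp [coeff_b_mul, coeff_iotaA_r, coeff_iotaA_sr, coeff_prA]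

lemma prA_mul (a u : MonoidAlgebra F (DihedralGroup n)) :
    prA F n (a * u) =
      prA F n a * prA F n u + mapDomain (·⁻¹) (prA F n (b * a)) * prA F n (b * u) := by
  conv_lhs => rw [← iotaA_prA_add_b_mul a]
  rw [add_mul, prA_add, prA_iotaA_mul, b_mul_iotaA, mul_assoc, prA_iotaA_mul]

lemma mem_span_iotaA_of_prA_mem {S : Set (MonoidAlgebra F (Multiplicative (ZMod n)))}
    {u : MonoidAlgebra F (DihedralGroup n)} (hu : prA F n u ∈ S) (hbu : prA F n (b * u) ∈ S) :
    u ∈ Ideal.span (iotaA F n '' S) := by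
  rw [← iotaA_prA_add_b_mul u]
  exact add_mem (Ideal.subset_span ⟨_, hu, rfl⟩)
    (Ideal.mul_mem_left _ _ (Ideal.subset_span ⟨_, hbu, rfl⟩))

lemma prA_mem_of_mem_span_iotaA {T : Ideal (MonoidAlgebra F (Multiplicative (ZMod n)))}
    {u : MonoidAlgebra F (DihedralGroup n)} (hu : u ∈ Ideal.span (iotaA F n '' T)) :
    prA F n u ∈ T ∧ prA F n (b * u) ∈ T := by
  induction hu using Submodule.span_induction with
  | mem _ hu =>
    obtain ⟨t, ht, rfl⟩ := hu
    rw [prA_iotaA, b_mul_iotaA, prA_iotaA_mul, prA_b, mul_zero]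
    exact ⟨ht, T.zero_mem⟩
  | zero =>
    rw [mul_zero, prA_zero]
    exact ⟨T.zero_mem, T.zero_mem⟩
  | add u v _ _ hu hv =>
    rw [mul_add, prA_add, prA_add]
    exact ⟨add_mem hu.1 hv.1, add_mem hu.2 hv.2⟩
  | smul a u _ hu =>
    have hbba : b * (b * a) = a := by rw [← mul_assoc, b_mul_b, one_mul]
    rw [smul_eq_mul, ← mul_assoc, prA_mul a, prA_mul (b * a), hbba]
    exact ⟨add_mem (T.mul_mem_left _ hu.1) (T.mul_mem_left _ hu.2),
      add_mem (T.mul_mem_left _ hu.1) (T.mul_mem_left _ hu.2)⟩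

end DihedralAlgebra

/-- `C ⊆ C_ext := F[D_n]·pr_a(C)`, and for any ideal `T` of `F[⟨a⟩]` with
`C ⊆ F[D_n]·T` one has `pr_a(C) ⊆ T` and `C_ext ⊆ F[D_n]·T`; so `C_ext` is the
smallest `⟨a⟩`-induced left ideal containing `C`. -/
theorem stmt_14 (F : Type*) [Field F] (n : ℕ) [NeZero n]
    (C : Ideal (MonoidAlgebra F (DihedralGroup n))) :
    C ≤ Ideal.span (iotaA F n '' (prA F n '' ↑C)) ∧
    ∀ T : Ideal (MonoidAlgebra F (Multiplicative (ZMod n))),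
      (C : Set (MonoidAlgebra F (DihedralGroup n))) ⊆ ↑(Ideal.span (iotaA F n '' ↑T)) →
        prA F n '' ↑C ⊆ ↑T ∧
        Ideal.span (iotaA F n '' (prA F n '' ↑C)) ≤ Ideal.span (iotaA F n '' ↑T) := by
  refine ⟨fun u hu => DihedralAlgebra.mem_span_iotaA_of_prA_mem ⟨u, hu, rfl⟩
    ⟨DihedralAlgebra.b * u, C.mul_mem_left _ hu, rfl⟩, fun T hCT => ?_⟩
  have hprA : prA F n '' C ⊆ T := by
    rintro _ ⟨u, hu, rfl⟩
    exact (DihedralAlgebra.prA_mem_of_mem_span_iotaA (hCT hu)).1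
  exact ⟨hprA, Ideal.span_mono (Set.image_mono hprA)⟩
end
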